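/- For each of the five cases (A_{2ℓ-1}, D_k, E_6, E_7, E_8) with Q as in the theorem and K determined by adjunction K·X + X² = -2 on each generating rational curve, one has K·Q + Q² = |Γ| - 4, hence a rational (genus 0) curve in the class Q with only simple nodes must have exactly |Γ|/2 - 1 nodes, where |Γ| = 2ℓ, 4(k-2), 24, 48, 120 respectively. -/

import Mathlib

open Matrix

/-- A_{2ℓ-1} Gram matrix on C, D₁, D₂. -/
def gA (ℓ : ℚ) : Matrix (Fin 3) (Fin 3) ℚ := !![0, 1, 1; 1, -ℓ, 0; 1, 0, -ℓ]
def bA (ℓ : ℚ) (v w : Fin 3 → ℚ) : ℚ := v ⬝ᵥ (gA ℓ).mulVec w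

/-- D_k Gram matrix on C, E, F, G. -/
def gD (k : ℚ) : Matrix (Fin 4) (Fin 4) ℚ :=
  !![-1, 1, 1, 1; 1, -(k-2), 0, 0; 1, 0, -2, 0; 1, 0, 0, -2]
def bD (k : ℚ) (v w : Fin 4 → ℚ) : ℚ := v ⬝ᵥ (gD k).mulVec w

/-- E_k Gram matrix on C, E, F, G. -/
def gE (k : ℚ) : Matrix (Fin 4) (Fin 4) ℚ :=
  !![-1, 1, 1, 1; 1, 3 - k, 0, 0; 1, 0, -2, 0; 1, 0, 0, -3]
def bE (k : ℚ) (v w : Fin 4 → ℚ) : ℚ := v ⬝ᵥ (gE k).mulVec w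

/-! Adjunction fixes the covector `K · -` on the generating curves, `K · Xᵢ = -Xᵢ² - 2`, so by
linearity `K · Q = -∑ qᵢ (Xᵢ² + 2)` for `Q = ∑ qᵢ Xᵢ`, and `K · Q + Q²` is read off the Gram
matrix. A rational curve with δ simple nodes has arithmetic genus δ, so `2δ - 2 = K · Q + Q²`. -/

theorem dotProduct_mulVec_add_self_of_adjunction {n R : Type*} [Fintype n] [CommRing R]
    (G : Matrix n n R) (K w : n → R) (hK : ∀ i, (K ᵥ* G) i = -G i i - 2) :
    K ⬝ᵥ G *ᵥ w + w ⬝ᵥ G *ᵥ w = w ⬝ᵥ G *ᵥ w - ∑ i, w i * (G i i + 2) := by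
  rw [dotProduct_mulVec, dotProduct, add_comm, sub_eq_add_neg, ← Finset.sum_neg_distrib]
  congr 1
  exact Finset.sum_congr rfl fun i _ => by rw [hK]; ring

theorem rational_nodal_count_of_eq {s N : ℚ} (h : s = N - 4) :
    s = N - 4 ∧ ∀ δ : ℚ, 2 * δ - 2 = s → δ = N / 2 - 1 :=
  ⟨h, fun δ hδ => by linarith⟩

theorem bA_canonical_add_self {ℓ : ℚ} {K : Fin 3 → ℚ} (hC : bA ℓ K ![1,0,0] = -2)
    (hD₁ : bA ℓ K ![0,1,0] = ℓ - 2) (hD₂ : bA ℓ K ![0,0,1] = ℓ - 2) :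
    bA ℓ K ![ℓ,1,1] + bA ℓ ![ℓ,1,1] ![ℓ,1,1] = 2*ℓ - 4 := by
  have hK : ∀ i, (K ᵥ* gA ℓ) i = -gA ℓ i i - 2 := by
    intro i
    fin_cases i <;> simp [bA, gA, vecMul, mulVec, dotProduct, Fin.sum_univ_three] at hC hD₁ hD₂ ⊢
      <;> linarith
  rw [bA, bA, dotProduct_mulVec_add_self_of_adjunction _ _ _ hK]
  simp only [dotProduct, mulVec, gA, of_apply, Fin.sum_univ_three, cons_val', cons_val_zero,
    cons_val_one, cons_val, cons_val_fin_one]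
  ring

theorem bD_canonical_add_self {k : ℚ} {K : Fin 4 → ℚ} (hC : bD k K ![1,0,0,0] = -1)
    (hE : bD k K ![0,1,0,0] = k - 4) (hF : bD k K ![0,0,1,0] = 0) (hG : bD k K ![0,0,0,1] = 0) :
    bD k K ![2*k-4,2,k-2,k-2] + bD k ![2*k-4,2,k-2,k-2] ![2*k-4,2,k-2,k-2] = 4*(k-2) - 4 := by
  have hK : ∀ i, (K ᵥ* gD k) i = -gD k i i - 2 := by
    intro i
    fin_cases i <;> simp [bD, gD, vecMul, mulVec, dotProduct, Fin.sum_univ_four] at hC hE hF hG ⊢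
      <;> linarith
  rw [bD, bD, dotProduct_mulVec_add_self_of_adjunction _ _ _ hK]
  simp only [dotProduct, mulVec, gD, of_apply, Fin.sum_univ_four, cons_val', cons_val_zero,
    cons_val_one, cons_val, cons_val_fin_one]
  ring

theorem bE_canonical_add_self {k a b c d : ℚ} {K : Fin 4 → ℚ} (hC : bE k K ![1,0,0,0] = -1)
    (hE : bE k K ![0,1,0,0] = k - 5) (hF : bE k K ![0,0,1,0] = 0) (hG : bE k K ![0,0,0,1] = 1) :
    bE k K ![a,b,c,d] + bE k ![a,b,c,d] ![a,b,c,d] =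
      -a^2 + (3-k)*b^2 - 2*c^2 - 3*d^2 + 2*a*(b+c+d) - a + (k-5)*b + d := by
  have hK : ∀ i, (K ᵥ* gE k) i = -gE k i i - 2 := by
    intro i
    fin_cases i <;> simp [bE, gE, vecMul, mulVec, dotProduct, Fin.sum_univ_four] at hC hE hF hG ⊢
      <;> linarith
  rw [bE, bE, dotProduct_mulVec_add_self_of_adjunction _ _ _ hK]
  simp only [dotProduct, mulVec, gE, of_apply, Fin.sum_univ_four, cons_val', cons_val_zero,
    cons_val_one, cons_val, cons_val_fin_one]
  ring

/-- In each of the five cases, with K determined by adjunction K·X = -X² - 2 on the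
generating curves, one has K·Q + Q² = |Γ| - 4; hence a rational nodal curve in the
class Q, whose node count δ satisfies 2δ - 2 = K·Q + Q², has δ = |Γ|/2 - 1 nodes. -/
theorem nodal_count :
    (∀ ℓ : ℚ, 1 ≤ ℓ → ∀ K : Fin 3 → ℚ,
      bA ℓ K ![1,0,0] = -2 → bA ℓ K ![0,1,0] = ℓ - 2 → bA ℓ K ![0,0,1] = ℓ - 2 →
      bA ℓ K ![ℓ,1,1] + bA ℓ ![ℓ,1,1] ![ℓ,1,1] = 2*ℓ - 4 ∧
      ∀ δ : ℚ, 2*δ - 2 = bA ℓ K ![ℓ,1,1] + bA ℓ ![ℓ,1,1] ![ℓ,1,1] → δ = 2*ℓ/2 - 1) ∧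
    (∀ k : ℚ, 3 ≤ k → ∀ K : Fin 4 → ℚ,
      bD k K ![1,0,0,0] = -1 → bD k K ![0,1,0,0] = k - 4 →
      bD k K ![0,0,1,0] = 0 → bD k K ![0,0,0,1] = 0 →
      bD k K ![2*k-4,2,k-2,k-2] + bD k ![2*k-4,2,k-2,k-2] ![2*k-4,2,k-2,k-2]
        = 4*(k-2) - 4 ∧
      ∀ δ : ℚ, 2*δ - 2 = bD k K ![2*k-4,2,k-2,k-2]
          + bD k ![2*k-4,2,k-2,k-2] ![2*k-4,2,k-2,k-2] → δ = 4*(k-2)/2 - 1) ∧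
    (∀ K : Fin 4 → ℚ,
      bE 6 K ![1,0,0,0] = -1 → bE 6 K ![0,1,0,0] = 1 →
      bE 6 K ![0,0,1,0] = 0 → bE 6 K ![0,0,0,1] = 1 →
      bE 6 K ![12,4,6,4] + bE 6 ![12,4,6,4] ![12,4,6,4] = 24 - 4 ∧
      ∀ δ : ℚ, 2*δ - 2 = bE 6 K ![12,4,6,4] + bE 6 ![12,4,6,4] ![12,4,6,4] →
        δ = 24/2 - 1) ∧
    (∀ K : Fin 4 → ℚ,
      bE 7 K ![1,0,0,0] = -1 → bE 7 K ![0,1,0,0] = 2 →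
      bE 7 K ![0,0,1,0] = 0 → bE 7 K ![0,0,0,1] = 1 →
      bE 7 K ![24,6,12,8] + bE 7 ![24,6,12,8] ![24,6,12,8] = 48 - 4 ∧
      ∀ δ : ℚ, 2*δ - 2 = bE 7 K ![24,6,12,8] + bE 7 ![24,6,12,8] ![24,6,12,8] →
        δ = 48/2 - 1) ∧
    (∀ K : Fin 4 → ℚ,
      bE 8 K ![1,0,0,0] = -1 → bE 8 K ![0,1,0,0] = 3 →
      bE 8 K ![0,0,1,0] = 0 → bE 8 K ![0,0,0,1] = 1 →
      bE 8 K ![60,12,30,20] + bE 8 ![60,12,30,20] ![60,12,30,20] = 120 - 4 ∧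
      ∀ δ : ℚ, 2*δ - 2 = bE 8 K ![60,12,30,20]
          + bE 8 ![60,12,30,20] ![60,12,30,20] → δ = 120/2 - 1) := by
  refine ⟨fun ℓ _ K hC hD₁ hD₂ => ?_, fun k _ K hC hE hF hG => ?_, fun K hC hE hF hG => ?_,
    fun K hC hE hF hG => ?_, fun K hC hE hF hG => ?_⟩
  · exact rational_nodal_count_of_eq (bA_canonical_add_self hC hD₁ hD₂)
  · exact rational_nodal_count_of_eq (bD_canonical_add_self hC hE hF hG)
  · refine rational_nodal_count_of_eq ?_
    rw [bE_canonical_add_self hC (hE.trans (by norm_num)) hF hG]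
    norm_num
  · refine rational_nodal_count_of_eq ?_
    rw [bE_canonical_add_self hC (hE.trans (by norm_num)) hF hG]
    norm_num
  · refine rational_nodal_count_of_eq ?_
    rw [bE_canonical_add_self hC (hE.trans (by norm_num)) hF hG]
    norm_num
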